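/- arXiv:1712.00301 — 3 statements merged into one kernel-verified Lean document; each statement's English description precedes it below -/
import Mathlib

section
/- Let $D = \operatorname{diag}(\lambda_1,\dots,\lambda_r)$, $\tilde B \in \mathbb{R}^{r\times m}$, and assume $\lambda_i + \lambda_j \ne 0$ for all $i,j$. Let $\tilde P_{\bar T}(\lambda_1,\dots,\lambda_r)$ be the unique solution of $D\tilde P_{\bar T} + \tilde P_{\bar T}D = -\tilde B\tilde B^T + e^{D\bar T}\tilde B\tilde B^T e^{D\bar T}$. Then $X^{(i)} = \partial_{\lambda_i}\tilde P_{\bar T}$ satisfies $D X^{(i)} + X^{(i)} D = -e_i e_i^T\tilde P_{\bar T} - \tilde P_{\bar T}e_i e_i^T + \bar T e_i e_i^T e^{D\bar T}\tilde B\tilde B^T e^{D\bar T} + \bar T e^{D\bar T}\tilde B\tilde B^T e^{D\bar T} e_i e_i^T$. -/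
/-!
Since `D` is diagonal, so is `e^{D T̄}`, and the `(a, b)` entry of the equation reads
`(λ_a + λ_b) P̃_ab = -(B̃B̃ᵀ)_ab + e^{T̄(λ_a + λ_b)} (B̃B̃ᵀ)_ab`. Differentiating this scalar identity
in `λ_i` gives the entries of the claimed equation for `X⁽ⁱ⁾`.
-/

open Matrix

theorem Matrix.exp_smul_diagonal {n : Type*} [Fintype n] [DecidableEq n] (T : ℝ) (l : n → ℝ) :
    NormedSpace.exp (T • diagonal l) = diagonal fun k => Real.exp (T * l k) := by
  rw [← diagonal_smul, exp_diagonal, Pi.exp_def, Real.exp_eq_exp_ℝ]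
  rfl

theorem Matrix.diagonal_mul_add_mul_diagonal_apply {n α : Type*} [Fintype n] [DecidableEq n]
    [CommSemiring α] (d : n → α) (A : Matrix n n α) (a b : n) :
    (diagonal d * A + A * diagonal d) a b = (d a + d b) * A a b := by
  simp only [add_apply, diagonal_mul, mul_diagonal]
  ring

theorem Matrix.diagonal_mul_mul_diagonal_apply {n α : Type*} [Fintype n] [DecidableEq n]
    [Semiring α] (u v : n → α) (N : Matrix n n α) (a b : n) :
    (diagonal u * N * diagonal v) a b = u a * N a b * v b := by
  simp only [diagonal_mul, mul_diagonal]

theorem hasDerivAt_update_apply {ι : Type*} [DecidableEq ι] (l : ι → ℝ) (i c : ι) :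
    HasDerivAt (fun x => Function.update l i x c) ((Pi.single i 1 : ι → ℝ) c) (l i) :=
  hasDerivAt_pi.1 (hasDerivAt_update l i (l i)) c

theorem time_limited_lyapunov_apply {n : Type*} [Fintype n] [DecidableEq n] {T : ℝ}
    {l : n → ℝ} {M P : Matrix n n ℝ}
    (h : diagonal l * P + P * diagonal l =
      -M + NormedSpace.exp (T • diagonal l) * M * NormedSpace.exp (T • diagonal l))
    (a b : n) :
    (l a + l b) * P a b = -M a b + Real.exp (T * (l a + l b)) * M a b := by
  have hab := congrFun (congrFun h a) b
  rw [diagonal_mul_add_mul_diagonal_apply, Matrix.add_apply, Matrix.neg_apply, exp_smul_diagonal,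
    diagonal_mul_mul_diagonal_apply] at hab
  rw [hab, mul_add, Real.exp_add]
  ring

theorem time_limited_lyapunov_deriv_apply {n : Type*} [Fintype n] [DecidableEq n]
    (lam : n → ℝ) (M : Matrix n n ℝ) (T : ℝ) (i : n) (P : (n → ℝ) → Matrix n n ℝ)
    (hP : ∀ l : n → ℝ, diagonal l * P l + P l * diagonal l =
      -M + NormedSpace.exp (T • diagonal l) * M * NormedSpace.exp (T • diagonal l))
    (X : Matrix n n ℝ)
    (hX : ∀ a b, HasDerivAt (fun x : ℝ => P (Function.update lam i x) a b) (X a b) (lam i))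
    (a b : n) :
    (lam a + lam b) * X a b =
      -(((Pi.single i 1 : n → ℝ) a + (Pi.single i 1 : n → ℝ) b) * P lam a b)
        + T * ((Pi.single i 1 : n → ℝ) a + (Pi.single i 1 : n → ℝ) b)
          * Real.exp (T * (lam a + lam b)) * M a b := by
  have hsum := (hasDerivAt_update_apply lam i a).fun_add (hasDerivAt_update_apply lam i b)
  have hlhs := hsum.fun_mul (hX a b)
  have hrhs := ((hsum.const_mul T).exp.mul_const (M a b)).const_add (-M a b)
  rw [funext fun x => time_limited_lyapunov_apply (hP (Function.update lam i x)) a b] at hlhs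
  simp only [Function.update_eq_self] at hlhs hrhs
  linear_combination hlhs.unique hrhs

theorem deriv_of_time_limited_gramian_general {r m : ℕ}
    (lam : Fin r → ℝ) (tB : Matrix (Fin r) (Fin m) ℝ) (T : ℝ) (i : Fin r)
    (P : (Fin r → ℝ) → Matrix (Fin r) (Fin r) ℝ)
    (hP : ∀ l : Fin r → ℝ,
      Matrix.diagonal l * P l + P l * Matrix.diagonal l =
        -(tB * tBᵀ) + NormedSpace.exp (T • Matrix.diagonal l) * (tB * tBᵀ)
          * NormedSpace.exp (T • Matrix.diagonal l))
    (X : Matrix (Fin r) (Fin r) ℝ)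
    (hX : ∀ a b, HasDerivAt (fun x : ℝ => P (Function.update lam i x) a b) (X a b) (lam i)) :
    Matrix.diagonal lam * X + X * Matrix.diagonal lam =
      -(Matrix.single i i 1 * P lam) - P lam * Matrix.single i i 1
      + T • (Matrix.single i i 1 *
          (NormedSpace.exp (T • Matrix.diagonal lam) * (tB * tBᵀ)
            * NormedSpace.exp (T • Matrix.diagonal lam)))
      + T • ((NormedSpace.exp (T • Matrix.diagonal lam) * (tB * tBᵀ)
            * NormedSpace.exp (T • Matrix.diagonal lam)) * Matrix.single i i 1) := by
  ext a b
  have hab := time_limited_lyapunov_deriv_apply lam _ T i P hP X hX a b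
  rw [mul_add T (lam a), Real.exp_add] at hab
  simp only [← diagonal_single, exp_smul_diagonal, Matrix.add_apply,
    Matrix.sub_apply, Matrix.neg_apply, Matrix.smul_apply, diagonal_mul, mul_diagonal, smul_eq_mul]
  linear_combination hab

/-- The derivative `X⁽ⁱ⁾ = ∂_{λᵢ} P̃_T̄` of the solution of the time-limited
Lyapunov-type equation satisfies
`D X + X D = -eᵢeᵢᵀ P̃ - P̃ eᵢeᵢᵀ + T̄ eᵢeᵢᵀ e^{DT̄} B̃B̃ᵀ e^{DT̄} + T̄ e^{DT̄} B̃B̃ᵀ e^{DT̄} eᵢeᵢᵀ`. -/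
theorem deriv_of_time_limited_gramian {r m : ℕ}
    (lam : Fin r → ℝ) (tB : Matrix (Fin r) (Fin m) ℝ) (T : ℝ) (hT : 0 < T)
    (hspec : ∀ i j, lam i + lam j ≠ 0) (i : Fin r)
    (P : (Fin r → ℝ) → Matrix (Fin r) (Fin r) ℝ)
    (hP : ∀ l : Fin r → ℝ,
      Matrix.diagonal l * P l + P l * Matrix.diagonal l =
        -(tB * tBᵀ) + NormedSpace.exp (T • Matrix.diagonal l) * (tB * tBᵀ)
          * NormedSpace.exp (T • Matrix.diagonal l))
    (X : Matrix (Fin r) (Fin r) ℝ)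
    (hX : ∀ a b, HasDerivAt (fun x : ℝ => P (Function.update lam i x) a b) (X a b) (lam i)) :
    Matrix.diagonal lam * X + X * Matrix.diagonal lam =
      -(Matrix.single i i 1 * P lam) - P lam * Matrix.single i i 1
      + T • (Matrix.single i i 1 *
          (NormedSpace.exp (T • Matrix.diagonal lam) * (tB * tBᵀ)
            * NormedSpace.exp (T • Matrix.diagonal lam)))
      + T • ((NormedSpace.exp (T • Matrix.diagonal lam) * (tB * tBᵀ)
            * NormedSpace.exp (T • Matrix.diagonal lam)) * Matrix.single i i 1) :=
  deriv_of_time_limited_gramian_general lam tB T i P hP X hX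
end

section
/- Let $V, W \in \mathbb{R}^{n\times r}$ with $W^TV$ invertible, and set $\hat A = (W^TV)^{-1}W^TAV$, $\hat B = (W^TV)^{-1}W^TB$, $\hat C = CV$, $\operatorname{Pr} = V(W^TV)^{-1}W^T$. Assume $D \in \mathbb{R}^{r\times r}$ is diagonal, $\tilde B \in \mathbb{R}^{r\times m}$, and $V$ satisfies the Sylvester equation $-VD - AV = B\tilde B^T - e^{A\bar T}B\tilde B^T e^{D\bar T}$, with $(I\otimes A)+(D\otimes I)$ and $(I\otimes\hat A)+(D\otimes I)$ invertible. Then the difference between $(I\otimes\hat C)[(I\otimes\hat A)+(D\otimes I)]^{-1}(e^{D\bar T}\tilde B\otimes e^{\hat A\bar T}\hat B - \tilde B\otimes\hat B)\operatorname{vec}(I)$ and $(I\otimes C)[(I\otimes A)+(D\otimes I)]^{-1}(e^{D\bar T}\tilde B\otimes e^{A\bar T}B - \tilde B\otimes B)\operatorname{vec}(I)$ equals $E_c = (I\otimes\hat C)[(I\otimes\hat A)+(D\otimes I)]^{-1}(e^{D\bar T}\tilde B\otimes(W^TV)^{-1}W^T(e^{A\operatorname{Pr}\bar T} - e^{A\bar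 T})B)\operatorname{vec}(I)$. -/
/-! `D` is diagonal, so `D` and `e^{DT̄}` are symmetric; with `vec (N X Mᵀ) = (M ⊗ N) vec X`
the Sylvester equation for `V` says that `(I ⊗ A + D ⊗ I) vec V` is the full-order right-hand side,
hence the full-order term is `vec (C V) = vec Ĉ`.
Multiplying the Sylvester equation on the left by `Q = (WᵀV)⁻¹Wᵀ`, a left inverse of `V`, gives
the reduced one with solution `I`, except that `e^{ÂT̄} B̂` has to be replaced by `Q e^{AT̄} B`.
Since `Q (A Pr) = Â Q`, also `Q e^{A Pr T̄} = e^{ÂT̄} Q`, so the replacement costs exactly the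
term `Q (e^{A Pr T̄} - e^{AT̄}) B` of `E_c`, and the reduced term minus `E_c` is `vec Ĉ` too. -/

open Matrix Kronecker

/-- Column-stacking vectorization of a matrix: `vecC M (j, i) = M i j`. -/
def vecC {a b : Type*} (M : Matrix a b ℝ) : b × a → ℝ := fun q => M q.2 q.1

lemma Matrix.kronecker_sub {R l m n p : Type*} [Ring R] (A : Matrix l m R) (B₁ B₂ : Matrix n p R) :
    A ⊗ₖ (B₁ - B₂) = A ⊗ₖ B₁ - A ⊗ₖ B₂ := by
  ext
  simp [mul_sub]

section Vectorization

variable {a b c d : Type*}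

lemma vecC_add (X Y : Matrix a b ℝ) : vecC (X + Y) = vecC X + vecC Y := rfl

lemma vecC_sub (X Y : Matrix a b ℝ) : vecC (X - Y) = vecC X - vecC Y := rfl

lemma kronecker_mulVec_vecC [Fintype b] [Fintype d]
    (M : Matrix a b ℝ) (N : Matrix c d ℝ) (X : Matrix d b ℝ) :
    (M ⊗ₖ N) *ᵥ vecC X = vecC (N * X * Mᵀ) := by
  ext ⟨i, j⟩
  simp only [mulVec, vecC, dotProduct, mul_apply, kroneckerMap_apply, Fintype.sum_prod_type,
    transpose_apply, Finset.sum_mul]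
  exact Finset.sum_congr rfl fun _ _ => Finset.sum_congr rfl fun _ _ => by ring

lemma kronecker_sub_kronecker_mulVec_vecC_one [Fintype b] [Fintype c] [DecidableEq c]
    (E₁ E₂ : Matrix a c ℝ) (F₁ F₂ : Matrix b c ℝ) :
    (E₁ ⊗ₖ F₁ - E₂ ⊗ₖ F₂) *ᵥ vecC (1 : Matrix c c ℝ) = vecC (F₁ * E₁ᵀ - F₂ * E₂ᵀ) := by
  rw [sub_mulVec, kronecker_mulVec_vecC, kronecker_mulVec_vecC, Matrix.mul_one, Matrix.mul_one,
    vecC_sub]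

lemma sylvester_mulVec_vecC [Fintype a] [DecidableEq a] [Fintype b] [DecidableEq b]
    (A : Matrix a a ℝ) (D : Matrix b b ℝ) (X : Matrix a b ℝ) :
    ((1 : Matrix b b ℝ) ⊗ₖ A + D ⊗ₖ (1 : Matrix a a ℝ)) *ᵥ vecC X = vecC (A * X + X * Dᵀ) := by
  rw [add_mulVec, kronecker_mulVec_vecC, kronecker_mulVec_vecC, transpose_one, Matrix.mul_one,
    Matrix.one_mul, vecC_add]

lemma one_kronecker_mul_sylvester_inv_mul_mulVec_vecC_one [Fintype a] [DecidableEq a]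
    [Fintype b] [DecidableEq b] [Fintype d] [DecidableEq d] {A : Matrix a a ℝ} {D : Matrix b b ℝ}
    (hK : IsUnit ((1 : Matrix b b ℝ) ⊗ₖ A + D ⊗ₖ (1 : Matrix a a ℝ)))
    (C : Matrix c a ℝ) {X : Matrix a b ℝ} {E₁ E₂ : Matrix b d ℝ} {F₁ F₂ : Matrix a d ℝ}
    (hX : A * X + X * Dᵀ = F₁ * E₁ᵀ - F₂ * E₂ᵀ) :
    ((1 : Matrix b b ℝ) ⊗ₖ C * ((1 : Matrix b b ℝ) ⊗ₖ A + D ⊗ₖ (1 : Matrix a a ℝ))⁻¹ *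
      (E₁ ⊗ₖ F₁ - E₂ ⊗ₖ F₂)) *ᵥ vecC (1 : Matrix d d ℝ) = vecC (C * X) := by
  obtain ⟨_⟩ := hK.nonempty_invertible
  rw [← mulVec_mulVec, ← mulVec_mulVec, kronecker_sub_kronecker_mulVec_vecC_one, ← hX,
    ← sylvester_mulVec_vecC, inv_mulVec_eq_vec rfl, kronecker_mulVec_vecC, transpose_one,
    Matrix.mul_one]

end Vectorization

lemma reduced_sylvester_of_left_inv {n r m : Type*} [Fintype n] [Fintype r] [DecidableEq r]
    [Fintype m] {A EA EP : Matrix n n ℝ} {D Eh : Matrix r r ℝ} {V : Matrix n r ℝ} {Q : Matrix r n ℝ}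
    {B : Matrix n m ℝ} {E₁ E₂ : Matrix r m ℝ} (hQV : Q * V = 1) (hQEP : Q * EP = Eh * Q)
    (h : A * V + V * D = EA * B * E₁ᵀ - B * E₂ᵀ) :
    Q * A * V + D = (Eh * (Q * B) - Q * (EP - EA) * B) * E₁ᵀ - Q * B * E₂ᵀ := by
  have hproj := congrArg (Q * ·) h
  simp only [Matrix.mul_add, Matrix.mul_sub, ← Matrix.mul_assoc, hQV, Matrix.one_mul] at hproj
  rw [hproj, Matrix.mul_sub Q EP EA, Matrix.sub_mul (Q * EP), hQEP, Matrix.mul_assoc Eh,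
    sub_sub_cancel]

section

attribute [local instance] Matrix.linftyOpNormedRing Matrix.linftyOpNormedAlgebra

open Nat in
theorem Matrix.mul_exp_eq_exp_mul_of_mul_eq {𝕂 m n : Type*} [RCLike 𝕂] [Fintype m]
    [DecidableEq m] [Fintype n] [DecidableEq n] {Q : Matrix m n 𝕂} {M : Matrix n n 𝕂}
    {N : Matrix m m 𝕂} (h : Q * M = N * Q) : Q * NormedSpace.exp M = NormedSpace.exp N * Q := by
  have hpow (k : ℕ) : Q * M ^ k = N ^ k * Q := by
    induction k with
    | zero => simp
    | succ k ih =>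
      rw [pow_succ, ← Matrix.mul_assoc, ih, Matrix.mul_assoc, h, ← Matrix.mul_assoc, ← pow_succ]
  have hQM : HasSum (fun k => Q * ((k ! : 𝕂)⁻¹ • M ^ k)) (Q * NormedSpace.exp M) :=
    (NormedSpace.exp_series_hasSum_exp' M).map (addMonoidHomMulLeft Q)
      (continuous_const.matrix_mul continuous_id)
  have hNQ : HasSum (fun k => ((k ! : 𝕂)⁻¹ • N ^ k) * Q) (NormedSpace.exp N * Q) :=
    (NormedSpace.exp_series_hasSum_exp' N).map (addMonoidHomMulRight Q)
      (continuous_id.matrix_mul continuous_const)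
  simp only [Matrix.mul_smul, hpow, ← Matrix.smul_mul] at hQM
  exact hQM.unique hNQ

end

/-- Error in the first optimality condition for the time-limited IRKA-type algorithm:
the difference between the reduced-order and full-order sides of the `C`-condition
equals `E_c = (I⊗Ĉ)[(I⊗Â)+(D⊗I)]⁻¹ (e^{DT̄}B̃ ⊗ (WᵀV)⁻¹Wᵀ(e^{A Pr T̄} - e^{AT̄})B) vec(I)`. -/
theorem error_in_C_optimality_condition {n r m p : ℕ}
    (A : Matrix (Fin n) (Fin n) ℝ) (B : Matrix (Fin n) (Fin m) ℝ)
    (C : Matrix (Fin p) (Fin n) ℝ)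
    (V W : Matrix (Fin n) (Fin r) ℝ) (hWV : IsUnit (Wᵀ * V))
    (Ah : Matrix (Fin r) (Fin r) ℝ) (hAh : Ah = (Wᵀ * V)⁻¹ * Wᵀ * A * V)
    (Bh : Matrix (Fin r) (Fin m) ℝ) (hBh : Bh = (Wᵀ * V)⁻¹ * Wᵀ * B)
    (Ch : Matrix (Fin p) (Fin r) ℝ) (hCh : Ch = C * V)
    (Pr : Matrix (Fin n) (Fin n) ℝ) (hPr : Pr = V * (Wᵀ * V)⁻¹ * Wᵀ)
    (d : Fin r → ℝ) (D : Matrix (Fin r) (Fin r) ℝ) (hD : D = Matrix.diagonal d)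
    (tB : Matrix (Fin r) (Fin m) ℝ) (T : ℝ)
    (hV : -(V * D) - A * V =
      B * tBᵀ - NormedSpace.exp (T • A) * (B * tBᵀ) * NormedSpace.exp (T • D))
    (hK : IsUnit ((1 : Matrix (Fin r) (Fin r) ℝ) ⊗ₖ A + D ⊗ₖ (1 : Matrix (Fin n) (Fin n) ℝ)))
    (hKh : IsUnit ((1 : Matrix (Fin r) (Fin r) ℝ) ⊗ₖ Ah + D ⊗ₖ (1 : Matrix (Fin r) (Fin r) ℝ))) :
    (((1 : Matrix (Fin r) (Fin r) ℝ) ⊗ₖ Ch) *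
        ((1 : Matrix (Fin r) (Fin r) ℝ) ⊗ₖ Ah + D ⊗ₖ (1 : Matrix (Fin r) (Fin r) ℝ))⁻¹ *
        ((NormedSpace.exp (T • D) * tB) ⊗ₖ (NormedSpace.exp (T • Ah) * Bh)
          - tB ⊗ₖ Bh)) *ᵥ vecC (1 : Matrix (Fin m) (Fin m) ℝ)
      - (((1 : Matrix (Fin r) (Fin r) ℝ) ⊗ₖ C) *
          ((1 : Matrix (Fin r) (Fin r) ℝ) ⊗ₖ A + D ⊗ₖ (1 : Matrix (Fin n) (Fin n) ℝ))⁻¹ *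
          ((NormedSpace.exp (T • D) * tB) ⊗ₖ (NormedSpace.exp (T • A) * B)
            - tB ⊗ₖ B)) *ᵥ vecC (1 : Matrix (Fin m) (Fin m) ℝ)
    = (((1 : Matrix (Fin r) (Fin r) ℝ) ⊗ₖ Ch) *
        ((1 : Matrix (Fin r) (Fin r) ℝ) ⊗ₖ Ah + D ⊗ₖ (1 : Matrix (Fin r) (Fin r) ℝ))⁻¹ *
        ((NormedSpace.exp (T • D) * tB) ⊗ₖ
          ((Wᵀ * V)⁻¹ * Wᵀ *
            (NormedSpace.exp (T • (A * Pr)) - NormedSpace.exp (T • A)) * B)))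
        *ᵥ vecC (1 : Matrix (Fin m) (Fin m) ℝ) := by
  set EA := NormedSpace.exp (T • A)
  set ED := NormedSpace.exp (T • D)
  set Eh := NormedSpace.exp (T • Ah)
  set EP := NormedSpace.exp (T • (A * Pr))
  set Q := (Wᵀ * V)⁻¹ * Wᵀ with hQ
  have hDT : Dᵀ = D := hD ▸ diagonal_transpose d
  have hEDT : EDᵀ = ED := by rw [← Matrix.exp_transpose, transpose_smul, hDT]
  have hsyl : A * V + V * Dᵀ = EA * B * (ED * tB)ᵀ - B * tBᵀ := by
    rw [hDT, transpose_mul, hEDT, ← neg_sub]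
    simp only [Matrix.mul_assoc] at hV ⊢
    rw [← hV]
    abel
  have hQV : Q * V = 1 := by
    rw [Matrix.mul_assoc, nonsing_inv_mul _ ((isUnit_iff_isUnit_det _).mp hWV)]
  have hQEP : Q * EP = Eh * Q := mul_exp_eq_exp_mul_of_mul_eq <| by
    rw [Matrix.mul_smul, Matrix.smul_mul, hPr, Matrix.mul_assoc V, ← hQ, hAh]
    simp only [Matrix.mul_assoc]
  have hsylh : Ah * 1 + 1 * Dᵀ = (Eh * Bh - Q * (EP - EA) * B) * (ED * tB)ᵀ - Bh * tBᵀ := by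
    rw [Matrix.mul_one, Matrix.one_mul, hAh, hBh, reduced_sylvester_of_left_inv hQV hQEP hsyl]
  have hred := one_kronecker_mul_sylvester_inv_mul_mulVec_vecC_one hKh Ch hsylh
  rw [Matrix.mul_one, kronecker_sub, sub_right_comm, Matrix.mul_sub, sub_mulVec] at hred
  rw [one_kronecker_mul_sylvester_inv_mul_mulVec_vecC_one hK C hsyl, ← hCh, ← hred, sub_sub_cancel]
end

section
/- Let $V, W \in \mathbb{R}^{n\times r}$ with $W^TV$ invertible, $\hat A = (W^TV)^{-1}W^TAV$, $\hat B = (W^TV)^{-1}W^TB$, $\hat C = CV$, $\operatorname{Pr} = V(W^TV)^{-1}W^T$. Assume $D \in \mathbb{R}^{r\times r}$ is diagonal, $\tilde C \in \mathbb{R}^{p\times r}$, and $W$ satisfies $-WD - A^TW = C^T\tilde C - e^{A^T\bar T}C^T\tilde C e^{D\bar T}$, with the relevant Kronecker sums invertible. Then the difference between $(\hat B^T\otimes I)[(I\otimes D)+(\hat A^T\otimes I)]^{-1}(e^{\hat A^T\bar T}\hat C^T\otimes e^{D\bar T}\tilde C^T - \hat C^T\otimes\tilde C^T)\operatorname{vec}(I)$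 and $(B^T\otimes I)[(I\otimes D)+(A^T\otimes I)]^{-1}(e^{A^T\bar T}C^T\otimes e^{D\bar T}\tilde C^T - C^T\otimes\tilde C^T)\operatorname{vec}(I)$ equals $E_b = (\hat B^T\otimes I)[(I\otimes D)+(\hat A^T\otimes I)]^{-1}(V^T(e^{A^T\operatorname{Pr}^T\bar T} - e^{A^T\bar T})C^T\otimes e^{D\bar T}\tilde C^T)\operatorname{vec}(I)$. -/
/-!
Vectorizing turns the Kronecker sum into a Sylvester operator,
`(1 ⊗ D + Mᵀ ⊗ 1) vec X = vec (D X + X M)`. Transposing the Sylvester equation for `W`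
(`D` and `e^{D T̄}` are symmetric) shows that `vec Wᵀ` solves the full-order system, so
the full-order side is `vec (Wᵀ B)`. Multiplying that equation on the right by `V` and using
`WᵀV Â = WᵀAV` shows that `vec (WᵀV)` solves the reduced system whose right-hand side is the
reduced-order term minus `E_b`; since `WᵀV B̂ = WᵀB`, the reduced side minus `E_b` is
`vec (Wᵀ B)` as well. The one analytic input is `e^{Âᵀ T̄} Vᵀ = Vᵀ e^{Aᵀ Prᵀ T̄}`, which follows
from `Âᵀ Vᵀ = Vᵀ Aᵀ Prᵀ` termwise in the exponential series.
-/

open Matrix Kronecker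

namespace Matrix

variable {R : Type*} [CommRing R] {k l m n : Type*} [Fintype m] [DecidableEq m]

theorem kroneckerSum_mulVec_vec [Fintype n] [DecidableEq n] (D : Matrix n n R)
    (M : Matrix m m R) (X : Matrix n m R) :
    (1 ⊗ₖ D + Mᵀ ⊗ₖ 1) *ᵥ vec X = vec (D * X + X * M) := by
  rw [add_mulVec, kronecker_mulVec_vec, kronecker_mulVec_vec, vec_add, transpose_one,
    Matrix.mul_one, Matrix.one_mul, transpose_transpose]

theorem kronecker_one_mul_kroneckerSum_inv_mulVec_vec [Fintype n] [DecidableEq n]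
    {D : Matrix n n R} {M : Matrix m m R}
    (hK : IsUnit (1 ⊗ₖ D + Mᵀ ⊗ₖ 1)) (G : Matrix m k R) (X : Matrix n m R) :
    ((Gᵀ ⊗ₖ (1 : Matrix n n R)) * (1 ⊗ₖ D + Mᵀ ⊗ₖ 1)⁻¹) *ᵥ vec (D * X + X * M) =
      vec (X * G) := by
  rw [← kroneckerSum_mulVec_vec, ← mulVec_mulVec, mulVec_mulVec (vec X) (1 ⊗ₖ D + Mᵀ ⊗ₖ 1)⁻¹,
    nonsing_inv_mul _ ((isUnit_iff_isUnit_det _).mp hK), one_mulVec, kronecker_mulVec_vec,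
    Matrix.one_mul, transpose_transpose]

theorem kronecker_sub_kronecker_mulVec_vec_one (P : Matrix l m R) (Q : Matrix n m R)
    (P' : Matrix l m R) (Q' : Matrix n m R) :
    (P ⊗ₖ Q - P' ⊗ₖ Q') *ᵥ vec (1 : Matrix m m R) = vec (Q * Pᵀ - Q' * P'ᵀ) := by
  rw [sub_mulVec, kronecker_mulVec_vec, kronecker_mulVec_vec, vec_sub, Matrix.mul_one,
    Matrix.mul_one]

section Exponential

attribute [local instance] Matrix.linftyOpNormedAddCommGroup Matrix.linftyOpNormedSpace
  Matrix.linftyOpNormedRing Matrix.linftyOpNormedAlgebra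

variable {𝕂 : Type*} [RCLike 𝕂]

theorem exp_mul_eq_mul_exp_of_mul_eq [Fintype n] [DecidableEq n] {M : Matrix m m 𝕂}
    {N : Matrix n n 𝕂} {P : Matrix m n 𝕂}
    (h : M * P = P * N) : NormedSpace.exp M * P = P * NormedSpace.exp N := by
  have hpow : ∀ k : ℕ, M ^ k * P = P * N ^ k := by
    intro k
    induction k with
    | zero => simp
    | succ k ih => rw [pow_succ, pow_succ, Matrix.mul_assoc, h, ← Matrix.mul_assoc, ih,
        Matrix.mul_assoc]
  have hM := (NormedSpace.exp_series_hasSum_exp' (𝕂 := 𝕂) M).map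
    (AddMonoidHom.mk' (· * P) fun X Y => Matrix.add_mul X Y P)
    (continuous_id.matrix_mul continuous_const)
  have hN := (NormedSpace.exp_series_hasSum_exp' (𝕂 := 𝕂) N).map
    (AddMonoidHom.mk' (P * ·) fun X Y => Matrix.mul_add P X Y)
    (continuous_const.matrix_mul continuous_id)
  simp only [Function.comp_def, AddMonoidHom.mk'_apply, Matrix.smul_mul, Matrix.mul_smul,
    hpow] at hM hN
  exact hM.unique hN

end Exponential

end Matrix

theorem vecC_eq_vec {a b : Type*} (M : Matrix a b ℝ) : vecC M = M.vec := rfl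

section BCondition

variable {n r m p : Type*} [Fintype n] [Fintype r] [Fintype p]

theorem sylvester_transpose {A : Matrix n n ℝ} {C : Matrix p n ℝ} {W : Matrix n r ℝ}
    {D : Matrix r r ℝ} {tC : Matrix p r ℝ} {E : Matrix n n ℝ} {F : Matrix r r ℝ}
    (hD : Dᵀ = D) (hF : Fᵀ = F) (hW : -(W * D) - Aᵀ * W = Cᵀ * tC - E * (Cᵀ * tC) * F) :
    D * Wᵀ + Wᵀ * A = F * tCᵀ * C * Eᵀ - tCᵀ * C := by
  have h := congrArg transpose hW
  simp only [transpose_sub, transpose_neg, transpose_mul, transpose_transpose, hD, hF] at h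
  rw [← neg_neg (D * Wᵀ + Wᵀ * A), neg_add', h, neg_sub]
  simp only [Matrix.mul_assoc]

theorem B_condition_full_order [DecidableEq n] [DecidableEq r] [DecidableEq p]
    {A : Matrix n n ℝ} {C : Matrix p n ℝ} {W : Matrix n r ℝ} {D : Matrix r r ℝ}
    {tC : Matrix p r ℝ} {E : Matrix n n ℝ} {F : Matrix r r ℝ}
    (hK : IsUnit ((1 : Matrix n n ℝ) ⊗ₖ D + Aᵀ ⊗ₖ (1 : Matrix r r ℝ)))
    (hSyl : D * Wᵀ + Wᵀ * A = F * tCᵀ * C * Eᵀ - tCᵀ * C) (B : Matrix n m ℝ) :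
    ((Bᵀ ⊗ₖ (1 : Matrix r r ℝ)) * ((1 : Matrix n n ℝ) ⊗ₖ D + Aᵀ ⊗ₖ (1 : Matrix r r ℝ))⁻¹ *
        ((E * Cᵀ) ⊗ₖ (F * tCᵀ) - Cᵀ ⊗ₖ tCᵀ)) *ᵥ vecC (1 : Matrix p p ℝ) = vecC (Wᵀ * B) := by
  rw [vecC_eq_vec, vecC_eq_vec, ← mulVec_mulVec, kronecker_sub_kronecker_mulVec_vec_one,
    ← kronecker_one_mul_kroneckerSum_inv_mulVec_vec hK B Wᵀ, hSyl]
  simp only [transpose_mul, transpose_transpose, Matrix.mul_assoc]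

theorem B_condition_reduced_order [DecidableEq r] [DecidableEq p]
    {A : Matrix n n ℝ} {B : Matrix n m ℝ} {C : Matrix p n ℝ} {V W : Matrix n r ℝ}
    {Ah : Matrix r r ℝ} {Bh : Matrix r m ℝ} {Ch : Matrix p r ℝ}
    {D : Matrix r r ℝ} {tC : Matrix p r ℝ} {E EP : Matrix n n ℝ} {F Eh : Matrix r r ℝ}
    (hK : IsUnit ((1 : Matrix r r ℝ) ⊗ₖ D + Ahᵀ ⊗ₖ (1 : Matrix r r ℝ)))
    (hSyl : D * Wᵀ + Wᵀ * A = F * tCᵀ * C * Eᵀ - tCᵀ * C)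
    (hAh : Wᵀ * V * Ah = Wᵀ * A * V) (hBh : Wᵀ * V * Bh = Wᵀ * B) (hCh : Ch = C * V)
    (hEh : Eh * Vᵀ = Vᵀ * EP) :
    ((Bhᵀ ⊗ₖ (1 : Matrix r r ℝ)) * ((1 : Matrix r r ℝ) ⊗ₖ D + Ahᵀ ⊗ₖ (1 : Matrix r r ℝ))⁻¹ *
        ((Eh * Chᵀ) ⊗ₖ (F * tCᵀ) - Chᵀ ⊗ₖ tCᵀ - (Vᵀ * (EP - E) * Cᵀ) ⊗ₖ (F * tCᵀ)))
        *ᵥ vecC (1 : Matrix p p ℝ) = vecC (Wᵀ * B) := by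
  have hEhCh : Eh * Chᵀ = Vᵀ * EP * Cᵀ := by
    rw [hCh, transpose_mul, ← Matrix.mul_assoc, hEh]
  have hSylV : D * (Wᵀ * V) + Wᵀ * V * Ah = (F * tCᵀ * C * Eᵀ - tCᵀ * C) * V := by
    rw [hAh, ← hSyl]
    simp only [Matrix.add_mul, Matrix.mul_assoc]
  rw [vecC_eq_vec, vecC_eq_vec, ← hBh, ← mulVec_mulVec, sub_mulVec,
    kronecker_sub_kronecker_mulVec_vec_one, kronecker_mulVec_vec, ← vec_sub,
    ← kronecker_one_mul_kroneckerSum_inv_mulVec_vec hK Bh (Wᵀ * V), hSylV, hEhCh, hCh]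
  congr 2
  simp only [transpose_mul, transpose_sub, transpose_transpose, Matrix.mul_one, Matrix.sub_mul,
    Matrix.mul_sub, Matrix.mul_assoc]
  abel

end BCondition

/-- Error in the second optimality condition for the time-limited IRKA-type algorithm:
the difference between the reduced-order and full-order sides of the `B`-condition
equals `E_b = (B̂ᵀ⊗I)[(I⊗D)+(Âᵀ⊗I)]⁻¹ (Vᵀ(e^{Aᵀ Prᵀ T̄} - e^{AᵀT̄})Cᵀ ⊗ e^{DT̄}C̃ᵀ) vec(I)`. -/
theorem error_in_B_optimality_condition {n r m p : ℕ}
    (A : Matrix (Fin n) (Fin n) ℝ) (B : Matrix (Fin n) (Fin m) ℝ)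
    (C : Matrix (Fin p) (Fin n) ℝ)
    (V W : Matrix (Fin n) (Fin r) ℝ) (hWV : IsUnit (Wᵀ * V))
    (Ah : Matrix (Fin r) (Fin r) ℝ) (hAh : Ah = (Wᵀ * V)⁻¹ * Wᵀ * A * V)
    (Bh : Matrix (Fin r) (Fin m) ℝ) (hBh : Bh = (Wᵀ * V)⁻¹ * Wᵀ * B)
    (Ch : Matrix (Fin p) (Fin r) ℝ) (hCh : Ch = C * V)
    (Pr : Matrix (Fin n) (Fin n) ℝ) (hPr : Pr = V * (Wᵀ * V)⁻¹ * Wᵀ)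
    (d : Fin r → ℝ) (D : Matrix (Fin r) (Fin r) ℝ) (hD : D = Matrix.diagonal d)
    (tC : Matrix (Fin p) (Fin r) ℝ) (T : ℝ)
    (hW : -(W * D) - Aᵀ * W =
      Cᵀ * tC - NormedSpace.exp (T • Aᵀ) * (Cᵀ * tC) * NormedSpace.exp (T • D))
    (hK2 : IsUnit ((1 : Matrix (Fin n) (Fin n) ℝ) ⊗ₖ D + Aᵀ ⊗ₖ (1 : Matrix (Fin r) (Fin r) ℝ)))
    (hKh2 : IsUnit ((1 : Matrix (Fin r) (Fin r) ℝ) ⊗ₖ D + Ahᵀ ⊗ₖ (1 : Matrix (Fin r) (Fin r) ℝ))) :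
    ((Bhᵀ ⊗ₖ (1 : Matrix (Fin r) (Fin r) ℝ)) *
        ((1 : Matrix (Fin r) (Fin r) ℝ) ⊗ₖ D + Ahᵀ ⊗ₖ (1 : Matrix (Fin r) (Fin r) ℝ))⁻¹ *
        ((NormedSpace.exp (T • Ahᵀ) * Chᵀ) ⊗ₖ (NormedSpace.exp (T • D) * tCᵀ)
          - Chᵀ ⊗ₖ tCᵀ)) *ᵥ vecC (1 : Matrix (Fin p) (Fin p) ℝ)
      - ((Bᵀ ⊗ₖ (1 : Matrix (Fin r) (Fin r) ℝ)) *
          ((1 : Matrix (Fin n) (Fin n) ℝ) ⊗ₖ D + Aᵀ ⊗ₖ (1 : Matrix (Fin r) (Fin r) ℝ))⁻¹ *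
          ((NormedSpace.exp (T • Aᵀ) * Cᵀ) ⊗ₖ (NormedSpace.exp (T • D) * tCᵀ)
            - Cᵀ ⊗ₖ tCᵀ)) *ᵥ vecC (1 : Matrix (Fin p) (Fin p) ℝ)
    = ((Bhᵀ ⊗ₖ (1 : Matrix (Fin r) (Fin r) ℝ)) *
        ((1 : Matrix (Fin r) (Fin r) ℝ) ⊗ₖ D + Ahᵀ ⊗ₖ (1 : Matrix (Fin r) (Fin r) ℝ))⁻¹ *
        ((Vᵀ * (NormedSpace.exp (T • (Aᵀ * Prᵀ)) - NormedSpace.exp (T • Aᵀ)) * Cᵀ)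
          ⊗ₖ (NormedSpace.exp (T • D) * tCᵀ)))
        *ᵥ vecC (1 : Matrix (Fin p) (Fin p) ℝ) := by
  subst hD
  have hWV' : IsUnit (Wᵀ * V).det := (isUnit_iff_isUnit_det _).mp hWV
  have hSyl := sylvester_transpose (isSymm_diagonal d) ((isSymm_diagonal d).smul T).exp hW
  have hWVAh : Wᵀ * V * Ah = Wᵀ * A * V := by
    rw [hAh]
    simpa only [Matrix.mul_assoc] using mul_nonsing_inv_cancel_left _ (Wᵀ * A * V) hWV'
  have hWVBh : Wᵀ * V * Bh = Wᵀ * B := by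
    rw [hBh]
    simpa only [Matrix.mul_assoc] using mul_nonsing_inv_cancel_left _ (Wᵀ * B) hWV'
  have hExp : NormedSpace.exp (T • Ahᵀ) * Vᵀ = Vᵀ * NormedSpace.exp (T • (Aᵀ * Prᵀ)) := by
    refine exp_mul_eq_mul_exp_of_mul_eq ?_
    rw [Matrix.smul_mul, Matrix.mul_smul, hAh, hPr]
    simp only [transpose_mul, transpose_transpose, Matrix.mul_assoc]
  rw [B_condition_full_order hK2 hSyl B,
    ← B_condition_reduced_order hKh2 hSyl hWVAh hWVBh hCh hExp]
  simp only [Matrix.mul_sub, sub_mulVec]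
  abel
end
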